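/- arXiv:math/0409071 — 4 statements merged into one kernel-verified Lean document; each statement's English description precedes it below -/
import Mathlib

section
/- Let g be the free Lie algebra over a field F of characteristic zero on a nonempty set E. Then g acts faithfully on the class of finite-dimensional g-modules on which every generator e ∈ E acts nilpotently and only finitely many generators act nonzero. Concretely: for every nonzero x in U(g) there exist N ∈ ℕ and a finite subset J ⊆ E such that x acts nonzero on the module V_N(J) with basis {b_w : w a word in J of length ≤ N}, where a word u acts by u·b_w = b_{uw} if supp(u) ⊆ J and l(u)+l(w) ≤ N, and by 0 otherwise. -/
/-!
Expanding `x = ∑ xᵤ u` over words, `u · b_∅ = b_u` for every word `u` admissible for `V_N(J)`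
and `0` otherwise, so the coordinate of `x · b_∅` at an admissible word `w` is the coefficient
`x_w`. Taking `N` and `J` to be the length and the support of a word `w` with `x_w ≠ 0` makes `w`
admissible, hence `x · b_∅ ≠ 0`.
-/

/-- A word is admissible for the module `V_N(J)`: its length is at most `N` and its
support is contained in `J`. -/
def GoodWord {E : Type*} (N : ℕ) (J : Finset E) (w : FreeMonoid E) : Prop :=
  w.length ≤ N ∧ ∀ a ∈ FreeMonoid.toList w, a ∈ J

/-- The module `V_N(J)` with basis `{b_w : w a word in J of length ≤ N}`. -/
abbrev VNJ (F : Type*) [Field F] (E : Type*) (N : ℕ) (J : Finset E) :=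
  {w : FreeMonoid E // GoodWord N J w} →₀ F

namespace GoodWord

variable {E : Type*} {N : ℕ} {J : Finset E}

theorem one : GoodWord N J 1 := by
  constructor <;> simp

theorem self [DecidableEq E] (w : FreeMonoid E) :
    GoodWord w.length (FreeMonoid.toList w).toFinset w :=
  ⟨le_rfl, fun _ ha => List.mem_toFinset.mpr ha⟩

theorem mul {u w : FreeMonoid E}
    (hu : u.length + w.length ≤ N ∧ ∀ a ∈ FreeMonoid.toList u, a ∈ J) (hw : GoodWord N J w) :
    GoodWord N J (u * w) := by
  refine ⟨by simpa [FreeMonoid.length_mul] using hu.1, fun a ha => ?_⟩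
  rcases List.mem_append.mp (by simpa [FreeMonoid.toList_mul] using ha) with ha | ha
  · exact hu.2 a ha
  · exact hw.2 a ha

end GoodWord

section WordAction

variable {F : Type*} [Field F] {E : Type*} [DecidableEq E] {N : ℕ} {J : Finset E}

def IsWordAction (ρ : MonoidAlgebra F (FreeMonoid E) →ₐ[F] Module.End F (VNJ F E N J)) :
    Prop :=
  ∀ (u : FreeMonoid E) (b : {w : FreeMonoid E // GoodWord N J w}),
    ρ (MonoidAlgebra.single u 1) (Finsupp.single b 1) =
      if h : u.length + (b : FreeMonoid E).length ≤ N ∧ ∀ a ∈ FreeMonoid.toList u, a ∈ J then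
        Finsupp.single ⟨u * b, GoodWord.mul h b.2⟩ 1
      else 0

theorem IsWordAction.apply_single_one_apply
    {ρ : MonoidAlgebra F (FreeMonoid E) →ₐ[F] Module.End F (VNJ F E N J)} (hρ : IsWordAction ρ)
    (x : MonoidAlgebra F (FreeMonoid E)) (w : {w : FreeMonoid E // GoodWord N J w}) :
    ρ x (Finsupp.single ⟨1, GoodWord.one⟩ 1) w = x.coeff w := by
  induction x using MonoidAlgebra.induction_linear with
  | zero => simp
  | add x y hx hy => simp [hx, hy]
  | single u r =>
    rw [← mul_one r, ← MonoidAlgebra.smul_single', map_smul, LinearMap.smul_apply, hρ]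
    split_ifs with hu
    · simp only [MonoidAlgebra.smul_single', Finsupp.smul_single, MonoidAlgebra.coeff_single,
        mul_one, smul_eq_mul]
      exact (Finsupp.single_apply_left Subtype.val_injective _ _ _).symm
    · have hwu : u ≠ w := by
        rintro rfl
        exact hu ⟨by simpa using w.2.1, w.2.2⟩
      simp [MonoidAlgebra.coeff_single, hwu]

end WordAction

/-- the free Lie algebra on `E` acts faithfully on the finite-dimensional
integrable modules with finite support.  Identifying `U(g)` with the monoid algebra
`F[W]` of the free monoid of words, every nonzero `x ∈ U(g)` acts nonzero on some
module `V_N(J)`, where a word `u` acts by `u · b_w = b_{uw}` if `supp u ⊆ J` and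
`l(u) + l(w) ≤ N`, and by `0` otherwise; indeed `x · b_∅ ≠ 0`. -/
theorem stmt5 {F : Type*} [Field F] {E : Type*} [DecidableEq E]
    (x : MonoidAlgebra F (FreeMonoid E)) (hx : x ≠ 0) :
    ∃ (N : ℕ) (J : Finset E),
      ∀ ρ : MonoidAlgebra F (FreeMonoid E) →ₐ[F] Module.End F (VNJ F E N J),
        (∀ (u : FreeMonoid E) (b : {w : FreeMonoid E // GoodWord N J w}),
          ρ (MonoidAlgebra.single u 1) (Finsupp.single b 1) =
            if h : u.length + (b : FreeMonoid E).length ≤ N ∧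
                ∀ a ∈ FreeMonoid.toList u, a ∈ J then
              Finsupp.single
                ⟨u * (b : FreeMonoid E),
                  ⟨by simpa [FreeMonoid.length_mul] using h.1, by
                    intro a ha
                    rcases List.mem_append.mp (by simpa [FreeMonoid.toList_mul] using ha) with
                      h' | h'
                    · exact h.2 a h'
                    · exact b.2.2 a h'⟩⟩ (1 : F)
            else 0) →
        ρ x (Finsupp.single ⟨1, by constructor <;> simp⟩ 1) ≠ 0 := by
  obtain ⟨w, hw⟩ : ∃ w, x.coeff w ≠ 0 := by
    by_contra! h
    exact hx (MonoidAlgebra.coeff_inj.mp (Finsupp.ext h))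
  refine ⟨w.length, (FreeMonoid.toList w).toFinset, fun ρ hρ hzero => hw ?_⟩
  rw [← IsWordAction.apply_single_one_apply hρ x ⟨w, GoodWord.self w⟩, hzero, Finsupp.zero_apply]
end

section
/- Let F be a field of characteristic zero and E a set. Let G_free = ⋆_{e∈E} F_e be the free product of copies of the additive group (F,+) indexed by E, acting on integrable modules of the free Lie algebra g on E via t_e ↦ exp(t·e). Then this action of G_free on the class of finite-dimensional integrable g-modules with finite support is faithful: every element of G_free \ {1}, written in reduced form t_{e_p} ∗ ⋯ ∗ t_{e_1} with consecutive letters distinct and all t_{e_j} ≠ 0, acts nontrivially on the module V(e_1⋯e_p) with basis b_0,...,b_p where e_j b_{j-1} = b_j and all other generator actions on basis vectors are zero. -/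
/-! On `V(e₁⋯e_p)` the factor `1 + t_j e_j` sends a vector supported on `b_0, …, b_j` to one
supported on `b_0, …, b_{j+1}`, with `b_{j+1}`-coordinate `t_j` times its `b_j`-coordinate.
Hence the word applied to `b_0` has `b_p`-coordinate `t_1 ⋯ t_p ≠ 0`, while `b_0` has none. -/

/-- The action of the generator `e` of the free Lie algebra on the module
`V(e₁⋯e_p)` with basis `b_0, ..., b_p`:  `e · b_{j-1} = b_j` if `e = e_j`, and all
other generator actions on basis vectors are zero. -/
noncomputable def genAct {F : Type*} [Field F] {E : Type*} [DecidableEq E] {p : ℕ}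
    (es : Fin p → E) (e : E) : Module.End F (Fin (p + 1) → F) where
  toFun v i := Fin.cases 0 (fun j => if es j = e then v j.castSucc else 0) i
  map_add' v w := by
    funext i
    refine Fin.cases ?_ (fun j => ?_) i
    · simp
    · by_cases h : es j = e <;> simp [h]
  map_smul' c v := by
    funext i
    refine Fin.cases ?_ (fun j => ?_) i
    · simp
    · by_cases h : es j = e <;> simp [h]

section GenAct

variable {F : Type*} [Field F] {E : Type*} [DecidableEq E] {p : ℕ} (es : Fin p → E)

theorem genAct_apply_succ (e : E) (v : Fin (p + 1) → F) (j : Fin p) :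
    genAct es e v j.succ = if es j = e then v j.castSucc else 0 := rfl

variable {es}

theorem one_add_smul_genAct_apply_succ {v : Fin (p + 1) → F} {j : Fin p}
    (hv : ∀ i : Fin (p + 1), (j : ℕ) < i → v i = 0) (c : F) :
    ((1 + c • genAct es (es j) : Module.End F (Fin (p + 1) → F)) v) j.succ = c * v j.castSucc := by
  have hvj : v j.succ = 0 := hv _ (by simp)
  simp [genAct_apply_succ, hvj]

theorem one_add_smul_genAct_apply_eq_zero {v : Fin (p + 1) → F} {j : Fin p}
    (hv : ∀ i : Fin (p + 1), (j : ℕ) < i → v i = 0) (c : F)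
    {i : Fin (p + 1)} (hi : (j : ℕ) + 1 < i) :
    ((1 + c • genAct es (es j) : Module.End F (Fin (p + 1) → F)) v) i = 0 := by
  obtain ⟨i, rfl⟩ := Fin.exists_succ_eq.mpr (Fin.pos_iff_ne_zero.mp (by omega : 0 < (i : ℕ)))
  have hvi : v i.succ = 0 := hv _ (by omega)
  have hvi' : v i.castSucc = 0 := hv _ (by simp only [Fin.val_succ, Fin.val_castSucc] at hi ⊢; omega)
  simp [genAct_apply_succ, hvi, hvi']

end GenAct

section WordAct

variable {F : Type*} [Field F] {E : Type*} [DecidableEq E] {p : ℕ}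

/-- The product `exp(t_k e_k) ⋯ exp(t_1 e_1)` of the first `k` factors, acting on `V(e₁⋯e_p)`. -/
noncomputable def wordAct (es : Fin p → E) (t : Fin p → F) (k : ℕ) (hk : k ≤ p) :
    Module.End F (Fin (p + 1) → F) :=
  (List.ofFn fun j : Fin k =>
    1 + t (Fin.castLE hk j) • genAct es (es (Fin.castLE hk j))).reverse.prod

variable (es : Fin p → E) (t : Fin p → F)

theorem wordAct_zero (hk : 0 ≤ p) : wordAct es t 0 hk = 1 := rfl

theorem wordAct_succ {k : ℕ} (hk : k + 1 ≤ p) :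
    wordAct es t (k + 1) hk =
      (1 + t ⟨k, hk⟩ • genAct es (es ⟨k, hk⟩)) * wordAct es t k (Nat.le_of_succ_le hk) := by
  simp only [wordAct, List.ofFn_succ', List.concat_eq_append, List.reverse_append,
    List.reverse_singleton, List.singleton_append, List.prod_cons]
  rfl

theorem wordAct_apply_single_zero (k : ℕ) (hk : k ≤ p) :
    wordAct es t k hk (Pi.single 0 1) ⟨k, by omega⟩ = ∏ j : Fin k, t (Fin.castLE hk j) ∧
      ∀ i : Fin (p + 1), k < i → wordAct es t k hk (Pi.single 0 1) i = 0 := by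
  induction k with
  | zero =>
    refine ⟨by simp [wordAct_zero], fun i hi => ?_⟩
    have hi0 : i ≠ 0 := Fin.pos_iff_ne_zero.mp hi
    simp [wordAct_zero, hi0]
  | succ k ih =>
    obtain ⟨hlead, hvanish⟩ := ih (Nat.le_of_succ_le hk)
    rw [wordAct_succ]
    refine ⟨?_, fun i hi => one_add_smul_genAct_apply_eq_zero (j := ⟨k, hk⟩) hvanish _ hi⟩
    rw [Module.End.mul_apply]
    refine (one_add_smul_genAct_apply_succ (es := es) (j := ⟨k, hk⟩) hvanish _).trans ?_
    rw [Fin.prod_univ_castSucc, mul_comm]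
    exact congrArg (· * t ⟨k, hk⟩) hlead

end WordAct

theorem stmt6_general {F : Type*} [Field F] {E : Type*} [DecidableEq E]
    {p : ℕ} (hp : 0 < p) (es : Fin p → E)
    (t : Fin p → F) (ht : ∀ j, t j ≠ 0) :
    (((List.ofFn fun j : Fin p =>
        (1 : Module.End F (Fin (p + 1) → F)) + t j • genAct es (es j)).reverse.prod :
          Module.End F (Fin (p + 1) → F))
      (Pi.single 0 1) : Fin (p + 1) → F) ≠ Pi.single 0 1 := by
  intro hfixed
  have hlead := (wordAct_apply_single_zero es t p le_rfl).1
  have hlast : (Pi.single 0 1 : Fin (p + 1) → F) (Fin.last p) = 0 :=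
    Pi.single_eq_of_ne (Fin.pos_iff_ne_zero.mp (by rwa [Fin.lt_def, Fin.val_last])) 1
  have hprod : ∏ j : Fin p, t j = 0 := by
    rw [← hlast, ← hfixed]
    exact hlead.symm
  exact Finset.prod_ne_zero_iff.mpr (fun j _ => ht j) hprod

/-- faithfulness of the action of the free product `G_free = ⋆_{e∈E}(F,+)`
on finite-dimensional integrable modules of the free Lie algebra with finite support.
Every nontrivial reduced word `t_{e_p} ∗ ⋯ ∗ t_{e_1}` (consecutive letters distinct,
all `t_j ≠ 0`) acts nontrivially on `V(e₁⋯e_p)`: since each `e_j` acts with square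
zero there, `exp(t_j e_j) = 1 + t_j e_j`, and the composite
`exp(t_p e_p)⋯exp(t_1 e_1)` moves the basis vector `b_0`. -/
theorem stmt6 {F : Type*} [Field F] [CharZero F] {E : Type*} [DecidableEq E]
    {p : ℕ} (hp : 0 < p) (es : Fin p → E)
    (hd : ∀ (j : ℕ) (h : j + 1 < p),
      es ⟨j, lt_of_le_of_lt (Nat.le_succ j) h⟩ ≠ es ⟨j + 1, h⟩)
    (t : Fin p → F) (ht : ∀ j, t j ≠ 0) :
    (((List.ofFn fun j : Fin p =>
        (1 : Module.End F (Fin (p + 1) → F)) + t j • genAct es (es j)).reverse.prod :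
          Module.End F (Fin (p + 1) → F))
      (Pi.single 0 1) : Fin (p + 1) → F) ≠ Pi.single 0 1 :=
  stmt6_general hp es t ht
end

section
/- Let F be a field of characteristic zero and E a set with |E| ≥ 2, say containing distinct elements e1, e2. Let g be the free Lie algebra on E and U(g) = F[W] its enveloping algebra, identified with the monoid algebra of words. The linear functional h ∈ U(g)^* defined by h = φ_1 + φ_{e2} + φ_{e1 e2} + φ_{e2 e1 e2} + φ_{e1 e2 e1 e2} + ⋯ (i.e. h(w) = 1 if w is an alternating word ending in e2 or the empty word, appropriately alternating, and 0 otherwise) generates under the left regular action of U(g) on U(g)^* a finite-dimensional subspace, but h is not contained in the shuffle algebra ⊕_{w∈W} F φ_w. -/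
/-!
Right translation by a letter `a` sends `altFun F e1 e2` to `altFun F e2 e1` if `a = e2` and
to `0` otherwise, because the alternating words ending in `e2` are exactly the alternating words
ending in `e1`, followed by `e2`. As the letters generate the free monoid, all right translates of
`altFun F e1 e2` lie in the span of `altFun F e1 e2` and `altFun F e2 e1`. On the other hand, a
functional in the span of the coordinate functionals vanishes on all but finitely many words,
whereas `altFun F e1 e2` equals `1` on the infinitely many alternating words.
-/

/-- The alternating words `1, e₂, e₁e₂, e₂e₁e₂, e₁e₂e₁e₂, ...`. -/
def altWord {E : Type*} (e1 e2 : E) : ℕ → FreeMonoid E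
  | 0 => 1
  | n + 1 => (if n % 2 = 0 then FreeMonoid.of e2 else FreeMonoid.of e1) * altWord e1 e2 n

-- The functional `h = φ_1 + φ_{e₂} + φ_{e₁e₂} + φ_{e₂e₁e₂} + ⋯` on
-- `U(g) = F[W]`, taking value `1` on all alternating words and `0` elsewhere.
open Classical in
noncomputable def altFun (F : Type*) [Field F] {E : Type*} (e1 e2 : E) :
    Module.Dual F (MonoidAlgebra F (FreeMonoid E)) :=
  (Finsupp.lsum F fun w : FreeMonoid E =>
    if ∃ n : ℕ, w = altWord e1 e2 n then (LinearMap.id : F →ₗ[F] F) else 0)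
    ∘ₗ (MonoidAlgebra.coeffLinearEquiv F).toLinearMap

section RightTranslation

variable {R M : Type*} [CommSemiring R] [Monoid M]

open MonoidAlgebra in
theorem MonoidAlgebra.comp_mulRight_mem_of_closure_eq_top {S : Set M}
    (hS : Submonoid.closure S = ⊤) {V : Submodule R (Module.Dual R R[M])}
    (hV : ∀ s ∈ S, ∀ g ∈ V, g ∘ₗ LinearMap.mulRight R (of R M s) ∈ V)
    (x : R[M]) {g : Module.Dual R R[M]} (hg : g ∈ V) : g ∘ₗ LinearMap.mulRight R x ∈ V := by
  induction x using MonoidAlgebra.induction_on generalizing g with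
  | of m =>
    have hm : m ∈ Submonoid.closure S := hS ▸ Submonoid.mem_top m
    induction hm using Submonoid.closure_induction generalizing g with
    | mem s hs => exact hV s hs g hg
    | one => rwa [map_one, LinearMap.mulRight_one, LinearMap.comp_id]
    | mul m m' _ _ ihm ihm' =>
      rw [map_mul, LinearMap.mulRight_mul, ← LinearMap.comp_assoc]
      exact ihm (ihm' hg)
  | add x y ihx ihy =>
    have : g ∘ₗ LinearMap.mulRight R (x + y) =
        g ∘ₗ LinearMap.mulRight R x + g ∘ₗ LinearMap.mulRight R y :=
      LinearMap.ext fun z => by simp [mul_add]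
    rw [this]
    exact V.add_mem (ihx hg) (ihy hg)
  | smul r x ihx =>
    have : g ∘ₗ LinearMap.mulRight R (r • x) = r • g ∘ₗ LinearMap.mulRight R x :=
      LinearMap.ext fun z => by simp
    rw [this]
    exact V.smul_mem r (ihx hg)

end RightTranslation

theorem Module.Basis.finite_setOf_apply_ne_zero_of_mem_span_coord {ι R N : Type*}
    [CommSemiring R] [AddCommMonoid N] [Module R N] (b : Module.Basis ι R N)
    {f : Module.Dual R N} (hf : f ∈ Submodule.span R (Set.range b.coord)) :
    {i | f (b i) ≠ 0}.Finite := by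
  classical
  induction hf using Submodule.span_induction with
  | mem f hf =>
    obtain ⟨j, rfl⟩ := hf
    refine (Set.finite_singleton j).subset fun i hi => ?_
    simp_all [Finsupp.single_apply]
  | zero => simp
  | add f f' _ _ hf hf' =>
    refine (hf.union hf').subset fun i hi => ?_
    by_contra h
    simp_all
  | smul r f _ hf =>
    exact hf.subset fun i hi => right_ne_zero_of_mul (by simpa using hi)

section AlternatingWords

variable {E : Type*} (e1 e2 : E)

@[simp]
theorem length_altWord (n : ℕ) : (altWord e1 e2 n).length = n := by
  induction n with
  | zero => rfl
  | succ n ih => simp only [altWord, FreeMonoid.length_mul, ih]; split_ifs <;> simp [add_comm]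

theorem altWord_injective : Function.Injective (altWord e1 e2) := fun m n h => by
  simpa using congrArg FreeMonoid.length h

theorem altWord_succ' (n : ℕ) :
    altWord e1 e2 (n + 1) = altWord e2 e1 n * FreeMonoid.of e2 := by
  induction n generalizing e1 e2 with
  | zero => simp [altWord]
  | succ n ih =>
    rw [altWord, ih, altWord, ← mul_assoc]
    rcases Nat.mod_two_eq_zero_or_one n with h | h <;> simp [Nat.succ_mod_two_eq_zero_iff, h]

theorem mul_of_eq_altWord_iff (z : FreeMonoid E) (a : E) :
    (∃ n, z * FreeMonoid.of a = altWord e1 e2 n) ↔ a = e2 ∧ ∃ n, z = altWord e2 e1 n := by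
  constructor
  · rintro ⟨_ | n, h⟩
    · simpa using congrArg FreeMonoid.length h
    · rw [altWord_succ'] at h
      obtain ⟨hz, ha⟩ := List.append_inj' (congrArg FreeMonoid.toList h) rfl
      exact ⟨List.singleton_injective ha, n, FreeMonoid.toList.injective hz⟩
  · rintro ⟨rfl, n, rfl⟩
    exact ⟨n + 1, (altWord_succ' e1 a n).symm⟩

end AlternatingWords

section AlternatingFunctional

variable (F : Type*) [Field F] {E : Type*} (e1 e2 : E)

open Classical in
theorem altFun_single (w : FreeMonoid E) (c : F) :
    altFun F e1 e2 (MonoidAlgebra.single w c) = if ∃ n, w = altWord e1 e2 n then c else 0 := by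
  simp only [altFun, LinearMap.comp_apply, LinearEquiv.coe_coe,
    MonoidAlgebra.coeffLinearEquiv_apply, MonoidAlgebra.coeff_single, Finsupp.lsum_single]
  split_ifs <;> rfl

open Classical in
theorem altFun_comp_mulRight_of (a : E) :
    altFun F e1 e2 ∘ₗ LinearMap.mulRight F (MonoidAlgebra.of F _ (FreeMonoid.of a)) =
      if a = e2 then altFun F e2 e1 else 0 := by
  refine (MonoidAlgebra.basis _ F).ext fun z => ?_
  simp only [LinearMap.comp_apply, LinearMap.mulRight_apply, MonoidAlgebra.basis_apply,
    MonoidAlgebra.of_apply, MonoidAlgebra.single_mul_single, mul_one, altFun_single,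
    mul_of_eq_altWord_iff]
  split_ifs <;> simp_all [altFun_single]

end AlternatingFunctional

section Main

variable {F : Type*} [Field F] {E : Type*} (e1 e2 : E)

theorem span_range_comp_mulRight_altFun_le :
    Submodule.span F (Set.range fun x : MonoidAlgebra F (FreeMonoid E) =>
      altFun F e1 e2 ∘ₗ LinearMap.mulRight F x) ≤
      Submodule.span F {altFun F e1 e2, altFun F e2 e1} := by
  classical
  refine Submodule.span_le.2 <| Set.range_subset_iff.2 fun x =>
    MonoidAlgebra.comp_mulRight_mem_of_closure_eq_top FreeMonoid.closure_range_of ?_ x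
      (Submodule.subset_span (by simp))
  rintro _ ⟨a, rfl⟩ g hg
  induction hg using Submodule.span_induction with
  | mem g hg =>
    obtain rfl | rfl := hg <;>
    · rw [altFun_comp_mulRight_of]
      split_ifs
      · exact Submodule.subset_span (by simp)
      · exact Submodule.zero_mem _
  | zero => simp
  | add g g' _ _ hg hg' => simpa only [LinearMap.add_comp] using Submodule.add_mem _ hg hg'
  | smul r g _ hg => simpa only [LinearMap.smul_comp] using Submodule.smul_mem _ r hg

theorem altFun_notMem_span_coord :
    altFun F e1 e2 ∉ Submodule.span F (Set.range (MonoidAlgebra.basis (FreeMonoid E) F).coord) :=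
  fun h => (Set.infinite_of_injective_forall_mem (altWord_injective e1 e2)
    fun n => by simp [altFun_single]) (Module.Basis.finite_setOf_apply_ne_zero_of_mem_span_coord _ h)

end Main

theorem stmt8_general {F : Type*} [Field F] {E : Type*} {e1 e2 : E} :
    FiniteDimensional F
      (Submodule.span F (Set.range fun x : MonoidAlgebra F (FreeMonoid E) =>
        (altFun F e1 e2).comp (LinearMap.mulRight F x))) ∧
    altFun F e1 e2 ∉
      Submodule.span F (Set.range fun w : FreeMonoid E =>
        ((Finsupp.lapply w ∘ₗ (MonoidAlgebra.coeffLinearEquiv F).toLinearMap :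
          Module.Dual F (MonoidAlgebra F (FreeMonoid E))))) := by
  refine ⟨?_, altFun_notMem_span_coord e1 e2⟩
  have := FiniteDimensional.span_of_finite F (Set.toFinite {altFun F e1 e2, altFun F e2 e1})
  exact Submodule.finiteDimensional_of_le (span_range_comp_mulRight_altFun_le e1 e2)

/-- for `|E| ≥ 2` the functional `h = φ_1 + φ_{e₂} + φ_{e₁e₂} + ⋯`
spans, under the left regular action `(x ▹ h)(y) = h(yx)` of `U(g)` on `U(g)^*`, a
finite-dimensional subspace, but `h` is not in the shuffle algebra
`⊕_{w∈W} F φ_w` (the span of the dual-basis functionals). -/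
theorem stmt8 {F : Type*} [Field F] [CharZero F] {E : Type*} {e1 e2 : E}
    (hne : e1 ≠ e2) :
    FiniteDimensional F
      (Submodule.span F (Set.range fun x : MonoidAlgebra F (FreeMonoid E) =>
        (altFun F e1 e2).comp (LinearMap.mulRight F x))) ∧
    altFun F e1 e2 ∉
      Submodule.span F (Set.range fun w : FreeMonoid E =>
        ((Finsupp.lapply w ∘ₗ (MonoidAlgebra.coeffLinearEquiv F).toLinearMap :
          Module.Dual F (MonoidAlgebra F (FreeMonoid E))))) :=
  stmt8_general
end

section
/- Let F be a field of characteristic zero, E a set, g the free Lie algebra on E, and U(g)^* the full linear dual with actions (x ▹ h)(y) = h(yx) and (x ◁ h)(y) = h(xy). The set of h ∈ U(g)^* such that for all p ∈ ℕ and all e_1, ..., e_p ∈ E one has h(e_1^{k_1} ⋯ e_p^{k_p}) ≠ 0 for at most finitely many tuples (k_1,...,k_p) ∈ ℕ₀^p is a subalgebra of the convolution algebra U(g)^*, invariant under both actions ▹ and ◁, and invariant under the dual of the antipode of U(g). -/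
/-!
Membership is tested on the ordered monomials `e₁^{k₁}⋯e_p^{k_p}`. Since the letters are
primitive, `Δ` maps the monomial with exponent tuple `k` into the span of the tensors of
monomials with exponents `a`, `b`, `a + b = k`; so `h₁ * h₂` can be nonzero at `k` only if
`h₁` is nonzero at some `a` and `h₂` at some `b` with `a + b = k`. The counit kills every
monomial except `1`, and the antipode reverses a monomial up to sign. Multiplying a monomial by
a letter on either side gives a monomial in one more letter, with exponent `1` there; the
letters generate the algebra.
-/

open scoped TensorProduct

/-- The regular linear functions on `U(g) = F[W]`, the enveloping algebra of the free
Lie algebra on `E` (identified with the monoid algebra of the free monoid of words):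
functionals `h` such that for every `p` and every `e₁, ..., e_p ∈ E`,
`h(e₁^{k₁}⋯e_p^{k_p}) ≠ 0` for at most finitely many tuples `(k₁,...,k_p)`. -/
def RegularDual (F : Type*) [Field F] (E : Type*) :
    Set (Module.Dual F (MonoidAlgebra F (FreeMonoid E))) :=
  {h | ∀ (p : ℕ) (es : Fin p → E),
    {k : Fin p → ℕ | h (MonoidAlgebra.single
      ((List.ofFn fun i => FreeMonoid.of (es i) ^ k i).prod) (1 : F)) ≠ 0}.Finite}

open MonoidAlgebra

section OrderedMonomial

variable {R : Type*} [CommSemiring R] {E : Type*} {p : ℕ}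

noncomputable def orderedMonomial (R : Type*) [CommSemiring R] (es : Fin p → E)
    (k : Fin p → ℕ) : MonoidAlgebra R (FreeMonoid E) :=
  single ((List.ofFn fun i => FreeMonoid.of (es i) ^ k i).prod) 1

lemma orderedMonomial_eq_prod (es : Fin p → E) (k : Fin p → ℕ) :
    orderedMonomial R es k =
      (List.ofFn fun i => single (FreeMonoid.of (es i)) (1 : R) ^ k i).prod := by
  rw [orderedMonomial, ← of_apply, map_list_prod, List.map_ofFn]
  exact congrArg _ (List.ofFn_inj.2 (funext fun i => map_pow _ _ _))

@[simp]
lemma orderedMonomial_of_isEmpty (es : Fin 0 → E) (k : Fin 0 → ℕ) :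
    orderedMonomial R es k = 1 := by
  simp [orderedMonomial_eq_prod]

lemma orderedMonomial_cons (e : E) (es : Fin p → E) (n : ℕ) (k : Fin p → ℕ) :
    orderedMonomial R (Fin.cons e es) (Fin.cons n k) =
      single (FreeMonoid.of e) 1 ^ n * orderedMonomial R es k := by
  simp only [orderedMonomial_eq_prod, List.ofFn_succ, List.prod_cons, Fin.cons_zero,
    Fin.cons_succ]

lemma orderedMonomial_snoc (es : Fin p → E) (e : E) (k : Fin p → ℕ) (n : ℕ) :
    orderedMonomial R (Fin.snoc es e) (Fin.snoc k n) =
      orderedMonomial R es k * single (FreeMonoid.of e) 1 ^ n := by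
  simp only [orderedMonomial_eq_prod, List.ofFn_succ', List.concat_eq_append, List.prod_append,
    List.prod_singleton, Fin.snoc_castSucc, Fin.snoc_last]

end OrderedMonomial

section StructureMaps

variable {R : Type*} [CommSemiring R] {E : Type*}

lemma AlgHom.map_orderedMonomial_eq_zero {B : Type*} [Semiring B] [Algebra R B]
    (ε : MonoidAlgebra R (FreeMonoid E) →ₐ[R] B)
    (hε : ∀ a : E, ε (single (FreeMonoid.of a) 1) = 0) {p : ℕ} (es : Fin p → E)
    {k : Fin p → ℕ} (hk : k ≠ 0) : ε (orderedMonomial R es k) = 0 := by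
  obtain ⟨i, hi⟩ := Function.ne_iff.1 hk
  rw [orderedMonomial_eq_prod, map_list_prod, List.map_ofFn]
  exact List.prod_eq_zero
    (List.mem_ofFn.2 ⟨i, by simp only [Function.comp_apply, map_pow, hε, zero_pow hi]⟩)

variable (Δ : MonoidAlgebra R (FreeMonoid E) →ₐ[R]
    MonoidAlgebra R (FreeMonoid E) ⊗[R] MonoidAlgebra R (FreeMonoid E))
  (hΔ : ∀ a : E, Δ (single (FreeMonoid.of a) 1) =
    single (FreeMonoid.of a) 1 ⊗ₜ[R] 1 + 1 ⊗ₜ[R] single (FreeMonoid.of a) 1)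
include hΔ

lemma comul_letter_pow_mem_span (e : E) (n : ℕ) :
    Δ (single (FreeMonoid.of e) 1 ^ n) ∈ Submodule.span R
      {t | ∃ i j, i + j = n ∧
        (single (FreeMonoid.of e) (1 : R) ^ i) ⊗ₜ[R] (single (FreeMonoid.of e) 1 ^ j) = t} := by
  set x : MonoidAlgebra R (FreeMonoid E) := single (FreeMonoid.of e) 1
  have hcomm : Commute (x ⊗ₜ[R] (1 : MonoidAlgebra R (FreeMonoid E))) (1 ⊗ₜ[R] x) := by
    simp [Commute, SemiconjBy, Algebra.TensorProduct.tmul_mul_tmul]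
  rw [map_pow, hΔ, hcomm.add_pow]
  refine Submodule.sum_mem _ fun m hm => ?_
  rw [← nsmul_eq_mul', Algebra.TensorProduct.tmul_pow, Algebra.TensorProduct.tmul_pow, one_pow,
    one_pow, Algebra.TensorProduct.tmul_mul_tmul, mul_one, one_mul]
  exact Submodule.smul_of_tower_mem _ _
    (Submodule.subset_span ⟨m, n - m, by grind, rfl⟩)

lemma comul_orderedMonomial_mem_span {p : ℕ} (es : Fin p → E) (k : Fin p → ℕ) :
    Δ (orderedMonomial R es k) ∈ Submodule.span R
      {t | ∃ a b, a + b = k ∧ orderedMonomial R es a ⊗ₜ[R] orderedMonomial R es b = t} := by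
  induction p with
  | zero =>
    exact Submodule.subset_span
      ⟨k, k, Subsingleton.elim _ _, by simp [Algebra.TensorProduct.one_def]⟩
  | succ p ih =>
    cases es using Fin.consCases with | cons e es =>
    cases k using Fin.consCases with | cons n k =>
    rw [orderedMonomial_cons, map_mul]
    have hmul := Submodule.mul_mem_mul (comul_letter_pow_mem_span Δ hΔ e n) (ih es k)
    rw [Submodule.span_mul_span] at hmul
    refine Submodule.span_mono ?_ hmul
    rintro _ ⟨_, ⟨i, j, hij, rfl⟩, _, ⟨a, b, hab, rfl⟩, rfl⟩
    refine ⟨Fin.cons i a, Fin.cons j b, ?_, ?_⟩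
    · rw [← hij, ← hab]
      exact Matrix.cons_add_cons i a j b
    · simp only [orderedMonomial_cons, Algebra.TensorProduct.tmul_mul_tmul]

end StructureMaps

section Antipode

variable {R : Type*} [CommRing R] {E : Type*}
  (S : MonoidAlgebra R (FreeMonoid E) →ₗ[R] MonoidAlgebra R (FreeMonoid E))
  (hS1 : ∀ a : E, S (single (FreeMonoid.of a) 1) = -single (FreeMonoid.of a) 1)
  (hS2 : ∀ x y : MonoidAlgebra R (FreeMonoid E), S (x * y) = S y * S x)
  (hS3 : S 1 = 1)
include hS1 hS2 hS3

lemma antipode_letter_pow (e : E) (n : ℕ) :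
    S (single (FreeMonoid.of e) 1 ^ n) = (-1 : R) ^ n • single (FreeMonoid.of e) 1 ^ n := by
  induction n with
  | zero => simpa using hS3
  | succ n ih =>
    rw [pow_succ, hS2, ih, hS1, neg_mul, mul_smul_comm, ← pow_succ', ← pow_succ,
      pow_succ (-1 : R), mul_neg_one, neg_smul]

lemma antipode_orderedMonomial {p : ℕ} (es : Fin p → E) (k : Fin p → ℕ) :
    S (orderedMonomial R es k) =
      (-1 : R) ^ (∑ i, k i) • orderedMonomial R (es ∘ Fin.rev) (k ∘ Fin.rev) := by
  induction p with
  | zero => simpa using hS3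
  | succ p ih =>
    cases es using Fin.consCases with | cons e es =>
    cases k using Fin.consCases with | cons n k =>
    rw [orderedMonomial_cons, hS2, ih, antipode_letter_pow S hS1 hS2 hS3, smul_mul_smul,
      ← pow_add, Fin.cons_comp_rev, Fin.cons_comp_rev, orderedMonomial_snoc, Fin.sum_cons,
      add_comm]

end Antipode

theorem MonoidAlgebra.induction_on_freeMonoid {R : Type*} [CommSemiring R] {E : Type*}
    {motive : MonoidAlgebra R (FreeMonoid E) → Prop} (x : MonoidAlgebra R (FreeMonoid E))
    (one : motive 1) (letter_mul : ∀ a x, motive x → motive (single (FreeMonoid.of a) 1 * x))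
    (add : ∀ x y, motive x → motive y → motive (x + y))
    (smul : ∀ (r : R) x, motive x → motive (r • x)) : motive x := by
  induction x using MonoidAlgebra.induction_on with
  | of w =>
    induction w using FreeMonoid.inductionOn' with
    | one => rwa [map_one]
    | of_mul a w ih => rw [map_mul]; exact letter_mul a _ ih
  | add x y hx hy => exact add x y hx hy
  | smul r x hx => exact smul r x hx

lemma exists_mem_apply_ne_zero_of_mem_span {R M N : Type*} [Semiring R] [AddCommMonoid M]
    [Module R M] [AddCommMonoid N] [Module R N] (f : M →ₗ[R] N) {s : Set M} {x : M}
    (hx : x ∈ Submodule.span R s) (hfx : f x ≠ 0) : ∃ y ∈ s, f y ≠ 0 := by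
  by_contra! h
  exact hfx (Submodule.span_le.2 (fun y hy => LinearMap.mem_ker.2 (h y hy)) hx)

namespace RegularDual

variable {F : Type*} [Field F] {E : Type*}

lemma mem_iff {h : Module.Dual F (MonoidAlgebra F (FreeMonoid E))} :
    h ∈ RegularDual F E ↔
      ∀ (p : ℕ) (es : Fin p → E),
        (Function.support fun k => h (orderedMonomial F es k)).Finite :=
  Iff.rfl

lemma add_mem {h₁ h₂ : Module.Dual F (MonoidAlgebra F (FreeMonoid E))}
    (hh₁ : h₁ ∈ RegularDual F E) (hh₂ : h₂ ∈ RegularDual F E) :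
    h₁ + h₂ ∈ RegularDual F E :=
  fun p es => ((hh₁ p es).union (hh₂ p es)).subset (Function.support_add _ _)

lemma smul_mem (c : F) {h : Module.Dual F (MonoidAlgebra F (FreeMonoid E))}
    (hh : h ∈ RegularDual F E) : c • h ∈ RegularDual F E :=
  fun p es => (hh p es).subset (Function.support_const_smul_subset c _)

lemma counit_mem (ε : MonoidAlgebra F (FreeMonoid E) →ₐ[F] F)
    (hε : ∀ a : E, ε (single (FreeMonoid.of a) 1) = 0) :
    ε.toLinearMap ∈ RegularDual F E := by
  refine mem_iff.2 fun p es => (Set.finite_singleton 0).subset fun k hk => ?_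
  by_contra hk0
  exact hk (ε.map_orderedMonomial_eq_zero hε es hk0)

lemma convolution_mem
    (Δ : MonoidAlgebra F (FreeMonoid E) →ₐ[F]
      MonoidAlgebra F (FreeMonoid E) ⊗[F] MonoidAlgebra F (FreeMonoid E))
    (hΔ : ∀ a : E, Δ (single (FreeMonoid.of a) 1) =
      single (FreeMonoid.of a) 1 ⊗ₜ[F] 1 + 1 ⊗ₜ[F] single (FreeMonoid.of a) 1)
    {h₁ h₂ : Module.Dual F (MonoidAlgebra F (FreeMonoid E))} (hh₁ : h₁ ∈ RegularDual F E)
    (hh₂ : h₂ ∈ RegularDual F E) :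
    (TensorProduct.lid F F).toLinearMap.comp ((TensorProduct.map h₁ h₂).comp Δ.toLinearMap) ∈
      RegularDual F E := by
  refine mem_iff.2 fun p es =>
    ((mem_iff.1 hh₁ p es).image2 (· + ·) (mem_iff.1 hh₂ p es)).subset fun k hk => ?_
  obtain ⟨_, ⟨a, b, rfl, rfl⟩, hab⟩ := exists_mem_apply_ne_zero_of_mem_span
    ((TensorProduct.lid F F).toLinearMap.comp (TensorProduct.map h₁ h₂))
    (comul_orderedMonomial_mem_span Δ hΔ es k) hk
  simp only [LinearMap.coe_comp, LinearEquiv.coe_coe, Function.comp_apply,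
    TensorProduct.map_tmul, TensorProduct.lid_tmul, smul_eq_mul] at hab
  exact ⟨a, left_ne_zero_of_mul hab, b, right_ne_zero_of_mul hab, rfl⟩

lemma comp_antipode_mem
    (S : MonoidAlgebra F (FreeMonoid E) →ₗ[F] MonoidAlgebra F (FreeMonoid E))
    (hS1 : ∀ a : E, S (single (FreeMonoid.of a) 1) = -single (FreeMonoid.of a) 1)
    (hS2 : ∀ x y : MonoidAlgebra F (FreeMonoid E), S (x * y) = S y * S x)
    (hS3 : S 1 = 1) {h : Module.Dual F (MonoidAlgebra F (FreeMonoid E))}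
    (hh : h ∈ RegularDual F E) : h.comp S ∈ RegularDual F E := by
  refine mem_iff.2 fun p es => ((mem_iff.1 hh p (es ∘ Fin.rev)).preimage
    Fin.rev_surjective.injective_comp_right.injOn).subset fun k hk => ?_
  simp only [Function.mem_support, LinearMap.comp_apply,
    antipode_orderedMonomial S hS1 hS2 hS3, map_smul, smul_eq_mul] at hk
  exact right_ne_zero_of_mul hk

lemma comp_mulLeft_letter_mem {h : Module.Dual F (MonoidAlgebra F (FreeMonoid E))}
    (hh : h ∈ RegularDual F E) (a : E) :
    h.comp (LinearMap.mulLeft F (single (FreeMonoid.of a) 1)) ∈ RegularDual F E := by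
  refine mem_iff.2 fun p es => ((mem_iff.1 hh (p + 1) (Fin.cons a es)).preimage
    (Fin.cons_right_injective 1).injOn).subset fun k hk => ?_
  simpa only [Set.mem_preimage, Function.mem_support, LinearMap.comp_apply,
    LinearMap.mulLeft_apply, orderedMonomial_cons, pow_one] using hk

lemma comp_mulRight_letter_mem {h : Module.Dual F (MonoidAlgebra F (FreeMonoid E))}
    (hh : h ∈ RegularDual F E) (a : E) :
    h.comp (LinearMap.mulRight F (single (FreeMonoid.of a) 1)) ∈ RegularDual F E := by
  refine mem_iff.2 fun p es => ((mem_iff.1 hh (p + 1) (Fin.snoc es a)).preimage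
    (Fin.snoc_injective2.left 1).injOn).subset fun k hk => ?_
  simpa only [Set.mem_preimage, Function.mem_support, LinearMap.comp_apply,
    LinearMap.mulRight_apply, orderedMonomial_snoc, pow_one] using hk

lemma comp_mulLeft_mem (x : MonoidAlgebra F (FreeMonoid E)) :
    ∀ h ∈ RegularDual F E, h.comp (LinearMap.mulLeft F x) ∈ RegularDual F E := by
  induction x using MonoidAlgebra.induction_on_freeMonoid with
  | one =>
    intro h hh
    rwa [LinearMap.mulLeft_one, LinearMap.comp_id]
  | letter_mul a x ih =>
    intro h hh
    rw [LinearMap.mulLeft_mul, ← LinearMap.comp_assoc]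
    exact ih _ (comp_mulLeft_letter_mem hh a)
  | add x y hx hy =>
    intro h hh
    convert add_mem (hx h hh) (hy h hh) using 1
    ext; simp [add_mul]
  | smul c x hx =>
    intro h hh
    convert smul_mem c (hx h hh) using 1
    ext; simp

lemma comp_mulRight_mem (x : MonoidAlgebra F (FreeMonoid E)) :
    ∀ h ∈ RegularDual F E, h.comp (LinearMap.mulRight F x) ∈ RegularDual F E := by
  induction x using MonoidAlgebra.induction_on_freeMonoid with
  | one =>
    intro h hh
    rwa [LinearMap.mulRight_one, LinearMap.comp_id]
  | letter_mul a x ih =>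
    intro h hh
    rw [LinearMap.mulRight_mul, ← LinearMap.comp_assoc]
    exact comp_mulRight_letter_mem (ih h hh) a
  | add x y hx hy =>
    intro h hh
    convert add_mem (hx h hh) (hy h hh) using 1
    ext; simp [mul_add]
  | smul c x hx =>
    intro h hh
    convert smul_mem c (hx h hh) using 1
    ext; simp

end RegularDual

theorem stmt19_general {F : Type*} [Field F] {E : Type*}
    (Δ : MonoidAlgebra F (FreeMonoid E) →ₐ[F]
        (MonoidAlgebra F (FreeMonoid E) ⊗[F] MonoidAlgebra F (FreeMonoid E)))
    (hΔ : ∀ a : E, Δ (MonoidAlgebra.single (FreeMonoid.of a) 1) =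
        MonoidAlgebra.single (FreeMonoid.of a) 1 ⊗ₜ[F] 1 +
          1 ⊗ₜ[F] MonoidAlgebra.single (FreeMonoid.of a) 1)
    (ε : MonoidAlgebra F (FreeMonoid E) →ₐ[F] F)
    (hε : ∀ a : E, ε (MonoidAlgebra.single (FreeMonoid.of a) 1) = 0)
    (S : MonoidAlgebra F (FreeMonoid E) →ₗ[F] MonoidAlgebra F (FreeMonoid E))
    (hS1 : ∀ a : E, S (MonoidAlgebra.single (FreeMonoid.of a) 1) =
      -MonoidAlgebra.single (FreeMonoid.of a) 1)
    (hS2 : ∀ x y : MonoidAlgebra F (FreeMonoid E), S (x * y) = S y * S x)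
    (hS3 : S 1 = 1) :
    -- closed under addition and scalar multiplication
    (∀ h₁ ∈ RegularDual F E, ∀ h₂ ∈ RegularDual F E, h₁ + h₂ ∈ RegularDual F E) ∧
    (∀ c : F, ∀ h₁ ∈ RegularDual F E, c • h₁ ∈ RegularDual F E) ∧
    -- contains the unit of the convolution algebra (the counit)
    ε.toLinearMap ∈ RegularDual F E ∧
    -- closed under the convolution product
    (∀ h₁ ∈ RegularDual F E, ∀ h₂ ∈ RegularDual F E,
      ((TensorProduct.lid F F).toLinearMap.comp
        ((TensorProduct.map h₁ h₂).comp Δ.toLinearMap)) ∈ RegularDual F E) ∧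
    -- invariant under both regular actions of U(g)
    (∀ h₁ ∈ RegularDual F E, ∀ x : MonoidAlgebra F (FreeMonoid E),
      h₁.comp (LinearMap.mulRight F x) ∈ RegularDual F E ∧
        h₁.comp (LinearMap.mulLeft F x) ∈ RegularDual F E) ∧
    -- invariant under the dual of the antipode
    (∀ h₁ ∈ RegularDual F E, h₁.comp S ∈ RegularDual F E) := by
  exact ⟨fun _ hh₁ _ hh₂ => RegularDual.add_mem hh₁ hh₂,
    fun c _ hh => RegularDual.smul_mem c hh,
    RegularDual.counit_mem ε hε,
    fun _ hh₁ _ hh₂ => RegularDual.convolution_mem Δ hΔ hh₁ hh₂,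
    fun _ hh x => ⟨RegularDual.comp_mulRight_mem x _ hh, RegularDual.comp_mulLeft_mem x _ hh⟩,
    fun _ hh => RegularDual.comp_antipode_mem S hS1 hS2 hS3 hh⟩

/-- the set of regular linear functions is a subalgebra of the
convolution algebra `U(g)^*` (the convolution product being dual to the
comultiplication `Δ` making each letter primitive, with unit the counit `ε`), is
invariant under both regular actions `(x ▹ h)(y) = h(yx)` and `(x ◁ h)(y) = h(xy)`,
and is invariant under the dual of the antipode `S` (the anti-automorphism with
`S(e) = -e` on letters). -/
theorem stmt19 {F : Type*} [Field F] [CharZero F] {E : Type*}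
    (Δ : MonoidAlgebra F (FreeMonoid E) →ₐ[F]
        (MonoidAlgebra F (FreeMonoid E) ⊗[F] MonoidAlgebra F (FreeMonoid E)))
    (hΔ : ∀ a : E, Δ (MonoidAlgebra.single (FreeMonoid.of a) 1) =
        MonoidAlgebra.single (FreeMonoid.of a) 1 ⊗ₜ[F] 1 +
          1 ⊗ₜ[F] MonoidAlgebra.single (FreeMonoid.of a) 1)
    (ε : MonoidAlgebra F (FreeMonoid E) →ₐ[F] F)
    (hε : ∀ a : E, ε (MonoidAlgebra.single (FreeMonoid.of a) 1) = 0)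
    (S : MonoidAlgebra F (FreeMonoid E) →ₗ[F] MonoidAlgebra F (FreeMonoid E))
    (hS1 : ∀ a : E, S (MonoidAlgebra.single (FreeMonoid.of a) 1) =
      -MonoidAlgebra.single (FreeMonoid.of a) 1)
    (hS2 : ∀ x y : MonoidAlgebra F (FreeMonoid E), S (x * y) = S y * S x)
    (hS3 : S 1 = 1) :
    -- closed under addition and scalar multiplication
    (∀ h₁ ∈ RegularDual F E, ∀ h₂ ∈ RegularDual F E, h₁ + h₂ ∈ RegularDual F E) ∧
    (∀ c : F, ∀ h₁ ∈ RegularDual F E, c • h₁ ∈ RegularDual F E) ∧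
    -- contains the unit of the convolution algebra (the counit)
    ε.toLinearMap ∈ RegularDual F E ∧
    -- closed under the convolution product
    (∀ h₁ ∈ RegularDual F E, ∀ h₂ ∈ RegularDual F E,
      ((TensorProduct.lid F F).toLinearMap.comp
        ((TensorProduct.map h₁ h₂).comp Δ.toLinearMap)) ∈ RegularDual F E) ∧
    -- invariant under both regular actions of U(g)
    (∀ h₁ ∈ RegularDual F E, ∀ x : MonoidAlgebra F (FreeMonoid E),
      h₁.comp (LinearMap.mulRight F x) ∈ RegularDual F E ∧
        h₁.comp (LinearMap.mulLeft F x) ∈ RegularDual F E) ∧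
    -- invariant under the dual of the antipode
    (∀ h₁ ∈ RegularDual F E, h₁.comp S ∈ RegularDual F E) :=
  stmt19_general Δ hΔ ε hε S hS1 hS2 hS3
end
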